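/- Let 𝓛 be the lamplighter group, F̃_n = {(t, K) ∈ 𝓛 : t ∈ [0,n]∩ℤ and K ⊆ [0,n]∩ℤ}, and F_n = (F̃_n)⁻¹ · F̃_n. Then for all integers m ≥ 1 and n > 4m: |F_m F_n F_m \ F_n| / |F_n| ≤ 16·m·4^m·(m² + 4m + 2)² / (n+1). In particular, for m ≥ 3 one has |F_m F_n F_m \ F_n| / |F_n| ≤ 144·m⁵·4^m / (n+1). -/

import Mathlib

open scoped symmDiff

/-- The lamplighter group `ℤ ≀ ℤ₂`, realized as pairs `(t, K)` with `t ∈ ℤ` the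
position of the lamplighter and `K` a finite set of integers (the lamps turned on). -/
structure Lamp where
  pos : ℤ
  lamps : Finset ℤ
deriving DecidableEq

namespace Lamp

/-- The shift `t + K` of a finite set of integers. -/
def shift (t : ℤ) (K : Finset ℤ) : Finset ℤ := K.image (t + ·)

lemma mem_shift {t x : ℤ} {K : Finset ℤ} : x ∈ shift t K ↔ x - t ∈ K := by
  constructor
  · rintro h
    simp only [shift, Finset.mem_image] at h
    obtain ⟨k, hk, rfl⟩ := h
    simpa using hk
  · intro h
    simp only [shift, Finset.mem_image]
    exact ⟨x - t, h, by ring⟩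

lemma shift_symmDiff (t : ℤ) (A B : Finset ℤ) :
    shift t (A ∆ B) = shift t A ∆ shift t B := by
  ext x
  simp [mem_shift, Finset.mem_symmDiff]

lemma shift_shift (s t : ℤ) (K : Finset ℤ) : shift s (shift t K) = shift (s + t) K := by
  ext x
  simp [mem_shift, sub_sub]

lemma shift_zero (K : Finset ℤ) : shift 0 K = K := by
  ext x; simp [mem_shift]

lemma shift_empty (t : ℤ) : shift t (∅ : Finset ℤ) = ∅ := by
  simp [shift]

lemma empty_symmDiff (A : Finset ℤ) : (∅ : Finset ℤ) ∆ A = A := by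
  ext x; simp [Finset.mem_symmDiff]

lemma symmDiff_empty (A : Finset ℤ) : A ∆ (∅ : Finset ℤ) = A := by
  ext x; simp [Finset.mem_symmDiff]

lemma symmDiff_self' (A : Finset ℤ) : A ∆ A = (∅ : Finset ℤ) := by
  ext x; simp [Finset.mem_symmDiff]

instance : Mul Lamp := ⟨fun a b => ⟨a.pos + b.pos, a.lamps ∆ shift a.pos b.lamps⟩⟩
instance : One Lamp := ⟨⟨0, ∅⟩⟩
instance : Inv Lamp := ⟨fun a => ⟨-a.pos, shift (-a.pos) a.lamps⟩⟩

@[simp] lemma mul_pos' (a b : Lamp) : (a * b).pos = a.pos + b.pos := rfl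
@[simp] lemma mul_lamps (a b : Lamp) : (a * b).lamps = a.lamps ∆ shift a.pos b.lamps := rfl
@[simp] lemma one_pos' : (1 : Lamp).pos = 0 := rfl
@[simp] lemma one_lamps : (1 : Lamp).lamps = ∅ := rfl
@[simp] lemma inv_pos' (a : Lamp) : a⁻¹.pos = -a.pos := rfl
@[simp] lemma inv_lamps (a : Lamp) : a⁻¹.lamps = shift (-a.pos) a.lamps := rfl

@[ext] lemma ext' {a b : Lamp} (h1 : a.pos = b.pos) (h2 : a.lamps = b.lamps) : a = b := by
  cases a; cases b; simp_all

instance : Group Lamp where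
  mul_assoc a b c := by
    refine ext' ?_ ?_
    · simp [add_assoc]
    · simp [shift_symmDiff, shift_shift, symmDiff_assoc]
  one_mul a := by
    refine ext' ?_ ?_
    · simp
    · rw [mul_lamps, one_lamps, one_pos', shift_zero, empty_symmDiff]
  mul_one a := by
    refine ext' ?_ ?_
    · simp
    · rw [mul_lamps, one_lamps, shift_empty, symmDiff_empty]
  inv_mul_cancel a := by
    refine ext' ?_ ?_
    · simp
    · rw [mul_lamps, inv_lamps, inv_pos', symmDiff_self', one_lamps]

/-- The standard right Følner sets `F̃ n` of the lamplighter group. -/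
def Ftilde (n : ℕ) : Set Lamp :=
  {x | x.pos ∈ Set.Icc (0 : ℤ) n ∧ ∀ k ∈ x.lamps, k ∈ Set.Icc (0 : ℤ) n}

end Lamp

open Pointwise

/-- The two-sided Følner sets `F n = (F̃ n)⁻¹ · F̃ n` of the lamplighter group. -/
def Lamp.F (n : ℕ) : Set Lamp := (Lamp.Ftilde n)⁻¹ * Lamp.Ftilde n

/-!
An element `x` lies in `F N` exactly when its support `{0, x.pos} ∪ x.lamps` fits in an
interval of length `N`. For `a, b ∈ F m` the support of `a * y * b` lies in
`[-m, m] ∪ (a.pos + supp y) ∪ (a.pos + y.pos + [-m, m])` with `|a.pos| ≤ m`, so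
`a * y * b ∈ F n` as soon as the support of `y ∈ F n` reaches `2m` beyond both `0` and `y.pos`.
The remaining `y` are determined by one of `8 m (n + 1)` choices of position and window together
with one of `2 ^ (n + 1)` lamp sets in that window. Counting by position and lowest support point
gives `(n + 1) ^ 2 2 ^ n ≤ |F n|` and `|F m| ≤ 2 ^ m (m ^ 2 + 4 m + 2)`.
-/

theorem Set.ncard_mul_le {M : Type*} [Mul M] [IsCancelMul M] (s t : Set M) :
    (s * t).ncard ≤ s.ncard * t.ncard := by
  simpa only [Nat.card_coe_set_eq] using Set.natCard_mul_le

namespace Lamp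

open Finset

def supp (x : Lamp) : Finset ℤ := insert 0 (insert x.pos x.lamps)

lemma mem_supp {x : Lamp} {k : ℤ} : k ∈ supp x ↔ k = 0 ∨ k = x.pos ∨ k ∈ x.lamps := by
  simp [supp]

lemma zero_mem_supp (x : Lamp) : 0 ∈ supp x := mem_supp.2 (Or.inl rfl)

lemma pos_mem_supp (x : Lamp) : x.pos ∈ supp x := mem_supp.2 (Or.inr (Or.inl rfl))

lemma lamps_subset_supp (x : Lamp) : x.lamps ⊆ supp x :=
  fun _ hk => mem_supp.2 (Or.inr (Or.inr hk))

lemma shift_subset_Icc_iff {t a b : ℤ} {s : Finset ℤ} :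
    shift t s ⊆ Icc a b ↔ s ⊆ Icc (a - t) (b - t) := by
  simp only [subset_iff, mem_shift, mem_Icc]
  exact ⟨fun h k hk => by have := h (x := k + t) (by simpa using hk); omega,
    fun h k hk => by have := h hk; omega⟩

lemma supp_mul_subset (x y : Lamp) : supp (x * y) ⊆ supp x ∪ shift x.pos (supp y) := by
  intro k hk
  simp only [mem_union, mem_supp, mem_shift, mul_pos', mul_lamps, mem_symmDiff] at hk ⊢
  rcases hk with rfl | rfl | ⟨hk, -⟩ | ⟨hk, -⟩
  · exact Or.inl (Or.inl rfl)
  · exact Or.inr (Or.inr (Or.inl (by ring)))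
  · exact Or.inl (Or.inr (Or.inr hk))
  · exact Or.inr (Or.inr (Or.inr hk))

lemma supp_inv (x : Lamp) : supp x⁻¹ = shift (-x.pos) (supp x) := by
  ext k
  simp only [mem_supp, mem_shift, inv_pos', inv_lamps, sub_neg_eq_add]
  constructor
  · rintro (rfl | rfl | hk) <;> simp_all
  · rintro (hk | hk | hk)
    · exact Or.inr (Or.inl (by omega))
    · exact Or.inl (by omega)
    · exact Or.inr (Or.inr hk)

lemma mem_Ftilde_iff {N : ℕ} {x : Lamp} : x ∈ Ftilde N ↔ supp x ⊆ Icc 0 (N : ℤ) := by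
  simp only [Ftilde, Set.mem_ofPred_eq, Set.mem_Icc, subset_iff, mem_supp, mem_Icc]
  constructor
  · rintro ⟨hp, hl⟩ k (rfl | rfl | hk)
    exacts [⟨le_rfl, by omega⟩, hp, hl k hk]
  · intro h
    exact ⟨h (Or.inr (Or.inl rfl)), fun k hk => h (Or.inr (Or.inr hk))⟩

lemma mem_F_iff {N : ℕ} {x : Lamp} : x ∈ F N ↔ ∃ a : ℤ, supp x ⊆ Icc a (a + N) := by
  constructor
  · rintro ⟨u, hu, v, hv, rfl⟩
    rw [Set.mem_inv, mem_Ftilde_iff, supp_inv, shift_subset_Icc_iff] at hu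
    rw [mem_Ftilde_iff] at hv
    refine ⟨u.pos, (supp_mul_subset u v).trans (union_subset ?_ ?_)⟩
    · simpa [add_comm] using hu
    · rw [shift_subset_Icc_iff]; simpa using hv
  · rintro ⟨a, ha⟩
    refine ⟨⟨a, ∅⟩, ?_, ⟨x.pos - a, shift (-a) x.lamps⟩, ?_, ?_⟩
    · rw [Set.mem_inv, mem_Ftilde_iff]
      have := ha (zero_mem_supp x)
      intro k hk
      simp only [mem_supp, inv_pos', inv_lamps, shift_empty, notMem_empty, or_false, mem_Icc]
        at hk this ⊢
      omega
    · rw [mem_Ftilde_iff]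
      intro k hk
      have h0 := mem_Icc.1 (ha (zero_mem_supp x))
      have hp := mem_Icc.1 (ha (pos_mem_supp x))
      simp only [mem_supp, mem_shift, mem_Icc] at hk ⊢
      rcases hk with rfl | rfl | hk
      · omega
      · omega
      · have := mem_Icc.1 (ha (lamps_subset_supp x hk)); omega
    · ext1 <;> simp [shift_shift, shift_zero]

def lo (x : Lamp) : ℤ := (supp x).min' ⟨0, zero_mem_supp x⟩

def hi (x : Lamp) : ℤ := (supp x).max' ⟨0, zero_mem_supp x⟩

lemma lo_mem_supp (x : Lamp) : lo x ∈ supp x := min'_mem _ _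

lemma hi_mem_supp (x : Lamp) : hi x ∈ supp x := max'_mem _ _

lemma supp_subset_Icc_lo_hi (x : Lamp) : supp x ⊆ Icc (lo x) (hi x) :=
  fun _ hk => mem_Icc.2 ⟨min'_le _ _ hk, le_max' _ _ hk⟩

lemma mem_F_iff_hi_le {N : ℕ} {x : Lamp} : x ∈ F N ↔ hi x ≤ lo x + N := by
  rw [mem_F_iff]
  constructor
  · rintro ⟨a, ha⟩
    have hlo := mem_Icc.1 (ha (lo_mem_supp x))
    have hhi := mem_Icc.1 (ha (hi_mem_supp x))
    omega
  · intro h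
    exact ⟨lo x, (supp_subset_Icc_lo_hi x).trans (Icc_subset_Icc le_rfl h)⟩

lemma supp_subset_Icc_of_mem_F {N : ℕ} {x : Lamp} (hx : x ∈ F N) :
    supp x ⊆ Icc (-N : ℤ) N := by
  obtain ⟨a, ha⟩ := mem_F_iff.1 hx
  have h0 := mem_Icc.1 (ha (zero_mem_supp x))
  exact ha.trans (Icc_subset_Icc (by omega) (by omega))

def HasMargin (k : ℕ) (y : Lamp) : Prop :=
  lo y + k ≤ 0 ∧ k ≤ hi y ∧ lo y + k ≤ y.pos ∧ y.pos + k ≤ hi y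

lemma mul_mul_mem_F_of_hasMargin {m n : ℕ} {a y b : Lamp} (ha : a ∈ F m) (hy : y ∈ F n)
    (hb : b ∈ F m) (hmargin : HasMargin (2 * m) y) : a * y * b ∈ F n := by
  obtain ⟨h₁, h₂, h₃, h₄⟩ := hmargin
  have hwidth := mem_F_iff_hi_le.1 hy
  have hsa := supp_subset_Icc_of_mem_F ha
  have hsb := supp_subset_Icc_of_mem_F hb
  have hsy := supp_subset_Icc_lo_hi y
  have hapos := mem_Icc.1 (hsa (pos_mem_supp a))
  rw [mem_F_iff]
  refine ⟨a.pos + lo y, fun k hk => ?_⟩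
  rw [mul_assoc] at hk
  rw [mem_Icc]
  rcases mem_union.1 (supp_mul_subset _ _ hk) with hk | hk
  · have := mem_Icc.1 (hsa hk); omega
  · rw [mem_shift] at hk
    rcases mem_union.1 (supp_mul_subset _ _ hk) with hk | hk
    · have := mem_Icc.1 (hsy hk); omega
    · rw [mem_shift] at hk
      have := mem_Icc.1 (hsb hk); omega

lemma shift_injective (t : ℤ) : Function.Injective (shift t) := fun A A' h => by
  ext k
  simpa [mem_shift] using congrArg (k + t ∈ ·) h

noncomputable def windows (W : Finset (ℤ × ℤ)) (B : Finset ℤ) (d : ℕ) : Finset Lamp :=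
  (W ×ˢ (Ioc 0 (d : ℤ)).powerset).image fun q => ⟨q.1.1, shift q.1.2 (B ∪ q.2)⟩

lemma card_windows_le (W : Finset (ℤ × ℤ)) (B : Finset ℤ) (d : ℕ) :
    #(windows W B d) ≤ #W * 2 ^ d :=
  card_image_le.trans_eq (by simp [card_product, card_powerset])

lemma card_windows_singleton_zero (W : Finset (ℤ × ℤ)) (d : ℕ) :
    #(windows W {0} d) = #W * 2 ^ d := by
  rw [windows, card_image_of_injOn]
  · simp [card_product, card_powerset]
  rintro ⟨⟨p, c⟩, K⟩ hq ⟨⟨p', c'⟩, K'⟩ hq' h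
  simp only [coe_product, coe_powerset, Set.mem_prod, mem_coe, Set.mem_preimage]
    at hq hq'
  simp only [Lamp.mk.injEq] at h
  obtain ⟨rfl, hlamps⟩ := h
  -- `c` is the lowest lamp, so the lamps determine it
  have hlow : ∀ {c c' : ℤ} {K K' : Finset ℤ}, K' ⊆ Ioc 0 (d : ℤ) →
      shift c ({0} ∪ K) = shift c' ({0} ∪ K') → c' ≤ c := by
    intro c c' K K' hK' h
    have : c ∈ shift c' ({0} ∪ K') := h ▸ mem_shift.2 (by simp)
    rw [mem_shift, mem_union, mem_singleton] at this
    rcases this with h0 | hc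
    · omega
    · have := mem_Ioc.1 (hK' hc); omega
  obtain rfl := le_antisymm (hlow hq.2 hlamps.symm) (hlow hq'.2 hlamps)
  have hKK' := shift_injective c hlamps
  have h0K : ∀ {K : Finset ℤ}, K ⊆ Ioc 0 (d : ℤ) → 0 ∉ K := fun hK h0 => by
    simpa using hK h0
  simp only [singleton_union] at hKK'
  rw [← erase_insert (h0K hq.2), hKK', erase_insert (h0K hq'.2)]

lemma mem_windows_of_subset {W : Finset (ℤ × ℤ)} {B : Finset ℤ} {d : ℕ} {x : Lamp}
    {c : ℤ} (hW : (x.pos, c) ∈ W) (hB : shift c B ⊆ x.lamps)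
    (hK : x.lamps \ shift c B ⊆ Ioc c (c + d)) : x ∈ windows W B d := by
  refine mem_image.2 ⟨((x.pos, c), shift (-c) (x.lamps \ shift c B)),
    mem_product.2 ⟨hW, mem_powerset.2 fun k hk => ?_⟩, ?_⟩
  · rw [mem_shift] at hk
    have := mem_Ioc.1 (hK hk)
    rw [mem_Ioc]; omega
  · ext1
    · rfl
    · ext k
      have := @hB k
      simp only [mem_shift, mem_union, mem_sdiff, sub_neg_eq_add, sub_add_cancel] at this ⊢
      tauto

/-- Pairs `(position, lowest support point)` of the elements of `F N` whose lowest support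
point carries a lit lamp. -/
noncomputable def litPairs (N : ℕ) : Finset (ℤ × ℤ) :=
  (Icc (-N : ℤ) 0 ×ˢ Icc (0 : ℤ) N).image fun q => (q.1 + q.2, q.1)

/-- Pairs `(position, lowest support point)` of the remaining elements of `F N`: the lowest
support point is then `0` or the position. -/
noncomputable def unlitPairs (N : ℕ) : Finset (ℤ × ℤ) :=
  (Icc (-N : ℤ) N).image fun p => (p, min p 0)

lemma card_litPairs (N : ℕ) : #(litPairs N) = (N + 1) ^ 2 := by
  rw [litPairs, card_image_of_injective _ fun q q' h => by
    simp only [Prod.mk.injEq] at h; ext <;> omega]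
  simp [card_product, sq]
  omega

lemma card_unlitPairs_le (N : ℕ) : #(unlitPairs N) ≤ 2 * N + 1 :=
  card_image_le.trans_eq (by rw [Int.card_Icc]; omega)

lemma F_subset_windows (N : ℕ) :
    F N ⊆ ↑(windows (litPairs N) {0} N ∪ windows (unlitPairs N) ∅ N) := by
  intro x hx
  have hwidth := mem_F_iff_hi_le.1 hx
  have hs := supp_subset_Icc_lo_hi x
  have h0 := mem_Icc.1 (hs (zero_mem_supp x))
  have hp := mem_Icc.1 (hs (pos_mem_supp x))
  have hl : ∀ k ∈ x.lamps, lo x ≤ k ∧ k ≤ hi x := fun k hk =>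
    mem_Icc.1 (hs (lamps_subset_supp x hk))
  rw [coe_union, Set.mem_union]
  by_cases hlit : lo x ∈ x.lamps
  · refine Or.inl (mem_windows_of_subset (c := lo x) ?_ ?_ ?_)
    · exact mem_image.2 ⟨(lo x, x.pos - lo x), by simp; omega, by simp⟩
    · simpa [shift] using hlit
    · intro k hk
      simp only [shift, image_singleton, add_zero, mem_sdiff, mem_singleton] at hk
      have := hl k hk.1
      rw [mem_Ioc]; omega
  · have hlo : lo x = min x.pos 0 := by
      rcases mem_supp.1 (lo_mem_supp x) with h | h | h
      · omega
      · omega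
      · exact absurd h hlit
    refine Or.inr (mem_windows_of_subset (c := lo x) ?_ (by simp [shift]) ?_)
    · exact mem_image.2 ⟨x.pos, by simp; omega, by simp [hlo]⟩
    · intro k hk
      simp only [shift_empty, sdiff_empty] at hk
      have := hl k hk
      have : k ≠ lo x := fun h => hlit (h ▸ hk)
      rw [mem_Ioc]; omega

lemma windows_litPairs_subset_F (N : ℕ) : ↑(windows (litPairs N) {0} N) ⊆ F N := by
  intro x hx
  obtain ⟨⟨⟨p, c⟩, K⟩, hq, rfl⟩ := mem_image.1 hx
  simp only [litPairs, mem_product, mem_image, mem_powerset, mem_Icc, Prod.mk.injEq] at hq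
  obtain ⟨⟨⟨l, s⟩, hls, rfl, rfl⟩, hK⟩ := hq
  dsimp only at hls ⊢
  refine mem_F_iff.2 ⟨l, fun k hk => ?_⟩
  rw [mem_Icc]
  rcases mem_supp.1 hk with rfl | rfl | hk
  · omega
  · dsimp only; omega
  · rw [mem_shift, singleton_union, mem_insert] at hk
    rcases hk with hk | hk
    · omega
    · have := mem_Ioc.1 (hK hk); omega

lemma finite_F (N : ℕ) : (F N).Finite :=
  (finite_toSet _).subset (F_subset_windows N)

lemma ncard_F_le (N : ℕ) : (F N).ncard ≤ 2 ^ N * (N ^ 2 + 4 * N + 2) :=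
  calc (F N).ncard
      ≤ #(windows (litPairs N) {0} N ∪ windows (unlitPairs N) ∅ N) := by
        rw [← Set.ncard_coe_finset]; exact Set.ncard_le_ncard (F_subset_windows N)
    _ ≤ #(litPairs N) * 2 ^ N + #(unlitPairs N) * 2 ^ N :=
        (card_union_le _ _).trans (add_le_add (card_windows_le ..) (card_windows_le ..))
    _ ≤ (N + 1) ^ 2 * 2 ^ N + (2 * N + 1) * 2 ^ N := by
        gcongr
        exacts [(card_litPairs N).le, card_unlitPairs_le N]
    _ = 2 ^ N * (N ^ 2 + 4 * N + 2) := by ring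

lemma le_ncard_F (N : ℕ) : (N + 1) ^ 2 * 2 ^ N ≤ (F N).ncard := by
  rw [← card_litPairs, ← card_windows_singleton_zero, ← Set.ncard_coe_finset]
  exact Set.ncard_le_ncard (windows_litPairs_subset_F N) (finite_F N)

/-- One image for each of the four ways in which `y ∈ F N` can fail `HasMargin k`, recording
`y.pos` and a point `c` with `y.lamps ⊆ (c, c + N + 1]`. -/
noncomputable def marginPairs (k N : ℕ) : Finset (ℤ × ℤ) :=
  let D := Ico (0 : ℤ) k ×ˢ Icc (0 : ℤ) N
  D.image (fun q => (q.2 - q.1, -q.1 - 1)) ∪ D.image (fun q => (q.1 - q.2, q.1 - N - 1)) ∪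
    D.image (fun q => (q.1 - q.2, -q.2 - 1)) ∪ D.image (fun q => (q.2 - q.1, q.2 - N - 1))

lemma card_marginPairs_le (k N : ℕ) : #(marginPairs k N) ≤ 4 * (k * (N + 1)) := by
  have hD : #(Ico (0 : ℤ) k ×ˢ Icc (0 : ℤ) N) = k * (N + 1) := by
    simp [card_product]
  refine (card_union_le _ _).trans ?_
  grw [card_union_le, card_union_le, card_image_le, card_image_le, card_image_le, card_image_le]
  omega

lemma not_hasMargin_subset_windows (k N : ℕ) :
    {y ∈ F N | ¬HasMargin k y} ⊆ ↑(windows (marginPairs k N) ∅ (N + 1)) := by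
  rintro y ⟨hy, hmargin⟩
  have hwidth := mem_F_iff_hi_le.1 hy
  have hs := supp_subset_Icc_lo_hi y
  have h0 := mem_Icc.1 (hs (zero_mem_supp y))
  have hp := mem_Icc.1 (hs (pos_mem_supp y))
  simp only [HasMargin, not_and_or, not_le] at hmargin
  obtain ⟨c, hW, hc⟩ :
      ∃ c, (y.pos, c) ∈ marginPairs k N ∧ (c = lo y - 1 ∨ c = hi y - N - 1) := by
    simp only [marginPairs, mem_union, mem_image, mem_product, mem_Ico, mem_Icc, Prod.exists,
      Prod.mk.injEq]
    rcases hmargin with h | h | h | h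
    · refine ⟨lo y - 1, ?_, Or.inl rfl⟩
      exact Or.inl (Or.inl (Or.inl ⟨-lo y, y.pos - lo y, by omega⟩))
    · refine ⟨hi y - N - 1, ?_, Or.inr rfl⟩
      exact Or.inl (Or.inl (Or.inr ⟨hi y, hi y - y.pos, by omega⟩))
    · refine ⟨lo y - 1, ?_, Or.inl rfl⟩
      exact Or.inl (Or.inr ⟨y.pos - lo y, -lo y, by omega⟩)
    · refine ⟨hi y - N - 1, ?_, Or.inr rfl⟩
      exact Or.inr ⟨hi y - y.pos, hi y, by omega⟩
  refine mem_windows_of_subset hW (by simp [shift]) fun k hk => ?_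
  rw [shift_empty, sdiff_empty] at hk
  have := mem_Icc.1 (hs (lamps_subset_supp y hk))
  rw [mem_Ioc]; push_cast; omega

lemma ncard_not_hasMargin_le (k N : ℕ) :
    {y ∈ F N | ¬HasMargin k y}.ncard ≤ 8 * k * (N + 1) * 2 ^ N :=
  calc {y ∈ F N | ¬HasMargin k y}.ncard
      ≤ #(windows (marginPairs k N) ∅ (N + 1)) := by
        rw [← Set.ncard_coe_finset]; exact Set.ncard_le_ncard (not_hasMargin_subset_windows k N)
    _ ≤ 4 * (k * (N + 1)) * 2 ^ (N + 1) :=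
        (card_windows_le ..).trans (Nat.mul_le_mul_right _ (card_marginPairs_le k N))
    _ = 8 * k * (N + 1) * 2 ^ N := by ring

lemma ncard_mul_F_mul_diff_le (m n : ℕ) :
    ((F m * F n * F m) \ F n).ncard ≤
      (2 ^ m * (m ^ 2 + 4 * m + 2)) ^ 2 * (16 * m * (n + 1) * 2 ^ n) := by
  set bad := {y ∈ F n | ¬HasMargin (2 * m) y}
  have hsub : (F m * F n * F m) \ F n ⊆ F m * bad * F m := by
    rintro _ ⟨⟨_, ⟨a, ha, y, hy, rfl⟩, b, hb, rfl⟩, hnot⟩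
    by_cases hmargin : HasMargin (2 * m) y
    · exact absurd (mul_mul_mem_F_of_hasMargin ha hy hb hmargin) hnot
    · exact Set.mul_mem_mul (Set.mul_mem_mul ha ⟨hy, hmargin⟩) hb
  have hfin : (F m * bad * F m).Finite :=
    ((finite_F m).mul ((finite_F n).subset fun _ hy => hy.1)).mul (finite_F m)
  calc ((F m * F n * F m) \ F n).ncard
      ≤ (F m * bad * F m).ncard := Set.ncard_le_ncard hsub hfin
    _ ≤ (F m).ncard * bad.ncard * (F m).ncard :=
        (Set.ncard_mul_le _ _).trans (Nat.mul_le_mul_right _ (Set.ncard_mul_le _ _))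
    _ ≤ 2 ^ m * (m ^ 2 + 4 * m + 2) * (8 * (2 * m) * (n + 1) * 2 ^ n) *
          (2 ^ m * (m ^ 2 + 4 * m + 2)) := by
        gcongr
        exacts [ncard_F_le m, ncard_not_hasMargin_le _ n, ncard_F_le m]
    _ = _ := by ring

lemma ncard_mul_F_mul_diff_div_ncard_F_le (m n : ℕ) :
    (((F m * F n * F m) \ F n).ncard : ℝ) / (F n).ncard ≤
      16 * m * 4 ^ m * ((m : ℝ) ^ 2 + 4 * m + 2) ^ 2 / (n + 1) := by
  have hdiff : (((F m * F n * F m) \ F n).ncard : ℝ) ≤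
      (2 ^ m * ((m : ℝ) ^ 2 + 4 * m + 2)) ^ 2 * (16 * m * (n + 1) * 2 ^ n) := by
    exact_mod_cast ncard_mul_F_mul_diff_le m n
  have hF : ((n : ℝ) + 1) ^ 2 * 2 ^ n ≤ (F n).ncard := by exact_mod_cast le_ncard_F n
  calc (((F m * F n * F m) \ F n).ncard : ℝ) / (F n).ncard
      ≤ (2 ^ m * ((m : ℝ) ^ 2 + 4 * m + 2)) ^ 2 * (16 * m * (n + 1) * 2 ^ n) /
          (((n : ℝ) + 1) ^ 2 * 2 ^ n) := div_le_div₀ (by positivity) hdiff (by positivity) hF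
    _ = 16 * m * 4 ^ m * ((m : ℝ) ^ 2 + 4 * m + 2) ^ 2 / (n + 1) := by
        rw [show (4 : ℝ) ^ m = (2 ^ m) ^ 2 by rw [← pow_mul, mul_comm, pow_mul]; norm_num]
        field_simp

end Lamp

theorem stmt15_general (m n : ℕ) :
    (((Lamp.F m * Lamp.F n * Lamp.F m) \ Lamp.F n).ncard : ℝ) / ((Lamp.F n).ncard : ℝ) ≤
      16 * m * 4 ^ m * ((m : ℝ) ^ 2 + 4 * m + 2) ^ 2 / (n + 1) ∧
    (3 ≤ m →
      (((Lamp.F m * Lamp.F n * Lamp.F m) \ Lamp.F n).ncard : ℝ) / ((Lamp.F n).ncard : ℝ) ≤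
        144 * (m : ℝ) ^ 5 * 4 ^ m / (n + 1)) := by
  have hratio := Lamp.ncard_mul_F_mul_diff_div_ncard_F_le m n
  refine ⟨hratio, fun hm => hratio.trans ?_⟩
  have hm' : (3 : ℝ) ≤ m := by exact_mod_cast hm
  have hquad : (m : ℝ) ^ 2 + 4 * m + 2 ≤ 3 * m ^ 2 := by nlinarith
  gcongr ?_ / _
  calc 16 * m * 4 ^ m * ((m : ℝ) ^ 2 + 4 * m + 2) ^ 2 ≤ 16 * m * 4 ^ m * (3 * m ^ 2) ^ 2 := by
        gcongr
    _ = 144 * (m : ℝ) ^ 5 * 4 ^ m := by ring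

/-- For `m ≥ 1` and `n > 4m`,
`|F m · F n · F m \ F n| / |F n| ≤ 16 m 4^m (m² + 4m + 2)² / (n+1)`, and in
particular for `m ≥ 3` this is `≤ 144 m⁵ 4^m / (n+1)`. -/
theorem stmt15 (m n : ℕ) (hm : 1 ≤ m) (hn : 4 * m < n) :
    (((Lamp.F m * Lamp.F n * Lamp.F m) \ Lamp.F n).ncard : ℝ) / ((Lamp.F n).ncard : ℝ) ≤
      16 * m * 4 ^ m * ((m : ℝ) ^ 2 + 4 * m + 2) ^ 2 / (n + 1) ∧
    (3 ≤ m →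
      (((Lamp.F m * Lamp.F n * Lamp.F m) \ Lamp.F n).ncard : ℝ) / ((Lamp.F n).ncard : ℝ) ≤
        144 * (m : ℝ) ^ 5 * 4 ^ m / (n + 1)) :=
  stmt15_general m n
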